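/- arXiv:1409.8452 — 9 statements merged into one kernel-verified Lean document; each statement's English description precedes it below -/
import Mathlib

section
/- A subset of ℕ is piecewise syndetic if and only if it is the intersection of a thick set and a syndetic set, where a set is piecewise syndetic when there exists N ∈ ℕ such that the set contains arbitrarily long runs of the form: every block of N consecutive integers within arbitrarily long intervals meets the set. -/
/-!
Choose, one after another, blocks `[a m, a m + L m]` of length at least `m` on which `F` meets
every window of `N + 1` consecutive integers, each block starting at least two past the end of
the previous one. With `I` the union of the blocks, `F ∪ I` is thick and `F = (F ∪ I) ∩ (F ∪ Iᶜ)`.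
A window that avoids `Iᶜ` lies inside `I`, and since consecutive blocks are separated by a point
of `Iᶜ` it lies inside a single block, where it meets `F`; so `F ∪ Iᶜ` is syndetic.
-/

/-- A set of natural numbers is thick if it contains arbitrarily long runs of
consecutive integers. -/
def Thick (F : Set ℕ) : Prop := ∀ n : ℕ, ∃ k : ℕ, ∀ i ≤ n, k + i ∈ F

/-- A set of natural numbers is syndetic if there is `N` such that every
interval of `N + 1` consecutive integers meets it. -/
def Syndetic (F : Set ℕ) : Prop := ∃ N : ℕ, ∀ i : ℕ, ∃ j, i ≤ j ∧ j ≤ i + N ∧ j ∈ F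

/-- A set is piecewise syndetic if for some `N`, there are arbitrarily long
intervals `I` such that every block of `N + 1` consecutive integers inside `I`
meets the set. -/
def PiecewiseSyndetic (F : Set ℕ) : Prop :=
  ∃ N : ℕ, ∀ m : ℕ, ∃ a L : ℕ, m ≤ L ∧
    ∀ i : ℕ, a ≤ i → i + N ≤ a + L → ∃ j, i ≤ j ∧ j ≤ i + N ∧ j ∈ F

open Set

def SyndeticOn (F : Set ℕ) (N a L : ℕ) : Prop :=
  ∀ i, a ≤ i → i + N ≤ a + L → ∃ j, i ≤ j ∧ j ≤ i + N ∧ j ∈ F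

lemma SyndeticOn.mono {F : Set ℕ} {N a L a' L' : ℕ} (h : SyndeticOn F N a L) (ha : a ≤ a')
    (hL : a' + L' ≤ a + L) : SyndeticOn F N a' L' :=
  fun i hi hiN => h i (ha.trans hi) (by omega)

lemma exists_syndeticOn_ge {F : Set ℕ} {N : ℕ} (h : ∀ m, ∃ a L, m ≤ L ∧ SyndeticOn F N a L)
    (m t : ℕ) : ∃ a L, t ≤ a ∧ m ≤ L ∧ SyndeticOn F N a L := by
  obtain ⟨a, L, hL, hF⟩ := h (t + m)
  exact ⟨max a t, a + L - max a t, le_max_right _ _, by omega,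
    hF.mono (le_max_left _ _) (by omega)⟩

lemma exists_separated_seq {P : ℕ → ℕ → Prop} (h : ∀ m t, ∃ a L, t ≤ a ∧ m ≤ L ∧ P a L) :
    ∃ a L : ℕ → ℕ, (∀ m, m ≤ L m ∧ P (a m) (L m)) ∧ ∀ m, a m + L m + 1 < a (m + 1) := by
  choose a L ha hL hP using h
  let start : ℕ → ℕ := fun m => Nat.rec 0 (fun m t => a m t + L m t + 2) m
  refine ⟨fun m => a m (start m), fun m => L m (start m), fun m => ⟨hL _ _, hP _ _⟩, fun m => ?_⟩
  -- `start (m + 1)` unfolds to `a m (start m) + L m (start m) + 2`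
  exact Nat.lt_of_lt_of_le (Nat.lt_succ_self _) (ha (m + 1) (start (m + 1)))

section SeparatedBlocks

variable {a L : ℕ → ℕ} (hsep : ∀ m, a m + L m + 1 < a (m + 1))
include hsep

lemma end_lt_of_separated {p q : ℕ} (hpq : p < q) : a p + L p + 1 < a q :=
  have ha : StrictMono a := strictMono_nat_of_lt_succ fun m => by have := hsep m; omega
  (hsep p).trans_le (ha.monotone hpq)

lemma succ_end_notMem_iUnion_Icc (m : ℕ) : a m + L m + 1 ∉ ⋃ k, Icc (a k) (a k + L k) := by
  simp only [mem_iUnion, mem_Icc, not_exists, not_and, not_le]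
  intro k hk
  rcases lt_trichotomy k m with h | rfl | h
  · have := end_lt_of_separated hsep h; omega
  · omega
  · have := end_lt_of_separated hsep h; omega

lemma exists_block_of_Icc_subset_iUnion_Icc {i n : ℕ}
    (hsub : Icc i (i + n) ⊆ ⋃ k, Icc (a k) (a k + L k)) : ∃ m, a m ≤ i ∧ i + n ≤ a m + L m := by
  obtain ⟨m, hm⟩ := mem_iUnion.1 (hsub ⟨le_rfl, by omega⟩)
  refine ⟨m, hm.1, not_lt.1 fun hlt => succ_end_notMem_iUnion_Icc hsep m (hsub ⟨?_, ?_⟩)⟩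
  · have := hm.2; omega
  · omega

end SeparatedBlocks

lemma Thick.mono {A B : Set ℕ} (hA : Thick A) (hAB : A ⊆ B) : Thick B :=
  fun n => (hA n).imp fun _ hk i hi => hAB (hk i hi)

lemma thick_iUnion_Icc {a L : ℕ → ℕ} (hL : ∀ m, m ≤ L m) :
    Thick (⋃ m, Icc (a m) (a m + L m)) :=
  fun n => ⟨a n, fun i hi => mem_iUnion.2 ⟨n, by have := hL n; constructor <;> omega⟩⟩

lemma syndetic_union_compl {F I : Set ℕ} {N : ℕ}
    (hF : ∀ i, Icc i (i + N) ⊆ I → ∃ j, i ≤ j ∧ j ≤ i + N ∧ j ∈ F) : Syndetic (F ∪ Iᶜ) := by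
  refine ⟨N, fun i => ?_⟩
  by_cases hsub : Icc i (i + N) ⊆ I
  · obtain ⟨j, hij, hjN, hjF⟩ := hF i hsub
    exact ⟨j, hij, hjN, Or.inl hjF⟩
  · obtain ⟨j, ⟨hij, hjN⟩, hjI⟩ := not_subset.1 hsub
    exact ⟨j, hij, hjN, Or.inr hjI⟩

lemma PiecewiseSyndetic.exists_thick_syndetic {F : Set ℕ} (h : PiecewiseSyndetic F) :
    ∃ A B : Set ℕ, Thick A ∧ Syndetic B ∧ F = A ∩ B := by
  obtain ⟨N, hN⟩ := h
  obtain ⟨a, L, hblock, hsep⟩ := exists_separated_seq (exists_syndeticOn_ge hN)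
  refine ⟨F ∪ ⋃ m, Icc (a m) (a m + L m), F ∪ (⋃ m, Icc (a m) (a m + L m))ᶜ,
    (thick_iUnion_Icc fun m => (hblock m).1).mono subset_union_right,
    syndetic_union_compl (N := N) fun i hi => ?_, ?_⟩
  · obtain ⟨m, ham, hmN⟩ := exists_block_of_Icc_subset_iUnion_Icc hsep hi
    exact (hblock m).2 i ham hmN
  · rw [← union_inter_distrib_left, inter_compl_self, union_empty]

lemma Thick.piecewiseSyndetic_inter {A B : Set ℕ} (hA : Thick A) (hB : Syndetic B) :
    PiecewiseSyndetic (A ∩ B) := by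
  obtain ⟨N, hN⟩ := hB
  refine ⟨N, fun m => ?_⟩
  obtain ⟨k, hk⟩ := hA (m + N)
  refine ⟨k, m + N, by omega, fun i hi hiN => ?_⟩
  obtain ⟨j, hij, hjN, hjB⟩ := hN i
  refine ⟨j, hij, hjN, ?_, hjB⟩
  simpa [Nat.add_sub_cancel' (hi.trans hij)] using hk (j - k) (by omega)

/-- A set is piecewise syndetic iff it is the intersection of a thick set and a
syndetic set. -/
theorem stmt4 (F : Set ℕ) :
    PiecewiseSyndetic F ↔ ∃ A B : Set ℕ, Thick A ∧ Syndetic B ∧ F = A ∩ B :=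
  ⟨PiecewiseSyndetic.exists_thick_syndetic, by
    rintro ⟨A, B, hA, hB, rfl⟩
    exact hA.piecewiseSyndetic_inter hB⟩
end

section
/- A point x in a compact metric dynamical system (X,T) is a recurrent point (i.e., there is an increasing sequence of positive integers kₙ with T^{kₙ}(x) → x) if and only if for every open neighborhood U of x, the entering time set N(x,U) = {n ∈ ℕ : T^n(x) ∈ U} contains an IP-set. -/
/-!
Given positive return times into every neighbourhood of `x`, an IP-set of return times to `U`
is built by shrinking: `W₀ = U`, and `W_{m+1}` is the set of points of `W_m` that `f^[p_m]`
maps back into `W_m`, where `p_m` is a return time of `x` to the open set `W_m`. Composing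
these maps from the smallest index upwards keeps the orbit of `x` inside `U` along every finite
sum of the `p_m`. Conversely, finite sums of positive integers are unbounded, so every
neighbourhood of `x` is visited at arbitrarily late times, and first countability extracts a
recurrence sequence.
-/

open Filter Topology

section

variable {X : Type*} {f : X → X} {x : X}

theorem iterate_finset_sum_mem_of_mapsTo {W : ℕ → Set X} {p : ℕ → ℕ} (hW : Antitone W)
    (hmaps : ∀ m, Set.MapsTo f^[p m] (W (m + 1)) (W m)) (hx : ∀ m, x ∈ W m)
    (s : Finset ℕ) {m : ℕ} (hs : ∀ i ∈ s, m ≤ i) : f^[∑ i ∈ s, p i] x ∈ W m := by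
  induction s using Finset.induction_on_min generalizing m with
  | empty => exact hx m
  | insert a s has ih =>
    rw [Finset.sum_insert fun ha => (has a ha).false, Function.iterate_add_apply]
    exact hW (hs a (Finset.mem_insert_self a s)) (hmaps a (ih fun i hi => has i hi))

end

section

variable {X : Type*} [TopologicalSpace X] {f : X → X} {x : X}

theorem exists_pos_iterate_mem_of_tendsto {k : ℕ → ℕ} (hk_pos : ∀ n, 0 < k n)
    (hk : Tendsto (fun n => f^[k n] x) atTop (𝓝 x)) {U : Set X} (hU : U ∈ 𝓝 x) :
    ∃ n, 0 < n ∧ f^[n] x ∈ U :=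
  let ⟨N, hN⟩ := (hk.eventually hU).exists
  ⟨k N, hk_pos N, hN⟩

theorem exists_pos_forall_iterate_finset_sum_mem (hf : Continuous f)
    (hx : ∀ V : Set X, IsOpen V → x ∈ V → ∃ n, 0 < n ∧ f^[n] x ∈ V)
    {U : Set X} (hU : IsOpen U) (hxU : x ∈ U) :
    ∃ p : ℕ → ℕ, (∀ i, 0 < p i) ∧ ∀ s : Finset ℕ, f^[∑ i ∈ s, p i] x ∈ U := by
  let OpenNhd := {V : Set X // IsOpen V ∧ x ∈ V}
  choose t ht_pos ht_mem using fun V : OpenNhd => hx V.1 V.2.1 V.2.2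
  let shrink : OpenNhd → OpenNhd := fun V =>
    ⟨V.1 ∩ f^[t V] ⁻¹' V.1, V.2.1.inter (V.2.1.preimage (hf.iterate _)), V.2.2, ht_mem V⟩
  let W : ℕ → OpenNhd := fun m => shrink^[m] ⟨U, hU, hxU⟩
  have hW_succ (m : ℕ) : (W (m + 1)).1 = (W m).1 ∩ f^[t (W m)] ⁻¹' (W m).1 := by
    simp only [W, Function.iterate_succ_apply']
    rfl
  have hW_anti : Antitone fun m => (W m).1 :=
    antitone_nat_of_succ_le fun m => hW_succ m ▸ Set.inter_subset_left
  have hW_maps (m : ℕ) : Set.MapsTo f^[t (W m)] (W (m + 1)).1 (W m).1 := fun y hy =>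
    (hW_succ m ▸ hy).2
  exact ⟨fun m => t (W m), fun m => ht_pos _, fun s =>
    iterate_finset_sum_mem_of_mapsTo hW_anti hW_maps (fun m => (W m).2.2) s
      fun i _ => Nat.zero_le i⟩

theorem mapClusterPt_iterate_of_finset_sum_mem
    (h : ∀ U : Set X, IsOpen U → x ∈ U →
      ∃ p : ℕ → ℕ, (∀ i, 0 < p i) ∧ ∀ s : Finset ℕ, s.Nonempty → f^[∑ i ∈ s, p i] x ∈ U) :
    MapClusterPt x atTop fun n => f^[n] x := by
  rw [(nhds_basis_opens x).mapClusterPt_iff_frequently]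
  rintro U ⟨hxU, hU⟩
  obtain ⟨p, hp, hsum⟩ := h U hU hxU
  refine frequently_atTop.2 fun N =>
    ⟨∑ i ∈ Finset.range (N + 1), p i, ?_, hsum _ Finset.nonempty_range_add_one⟩
  have : N + 1 ≤ ∑ i ∈ Finset.range (N + 1), p i := by
    simpa using Finset.card_nsmul_le_sum (Finset.range (N + 1)) p 1 fun i _ => hp i
  omega

end

theorem stmt7_general {X : Type*} [MetricSpace X] (T : X ≃ₜ X) (x : X) :
    (∃ k : ℕ → ℕ, StrictMono k ∧ (∀ n, 0 < k n) ∧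
      Filter.Tendsto (fun n => (⇑T)^[k n] x) Filter.atTop (nhds x)) ↔
    (∀ U : Set X, IsOpen U → x ∈ U →
      ∃ p : ℕ → ℕ, (∀ i, 0 < p i) ∧
        ∀ s : Finset ℕ, s.Nonempty →
          (∑ i ∈ s, p i) ∈ {n : ℕ | 0 < n ∧ (⇑T)^[n] x ∈ U}) := by
  constructor
  · rintro ⟨k, -, hk_pos, hk⟩ U hU hxU
    obtain ⟨p, hp, hsum⟩ := exists_pos_forall_iterate_finset_sum_mem T.continuous
      (fun V hV hxV => exists_pos_iterate_mem_of_tendsto hk_pos hk (hV.mem_nhds hxV)) hU hxU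
    exact ⟨p, hp, fun s hs => ⟨Finset.sum_pos (fun i _ => hp i) hs, hsum s⟩⟩
  · intro h
    have hcluster : MapClusterPt x atTop fun n => (⇑T)^[n] x :=
      mapClusterPt_iterate_of_finset_sum_mem fun U hU hxU =>
        let ⟨p, hp, hsum⟩ := h U hU hxU
        ⟨p, hp, fun s hs => (hsum s hs).2⟩
    obtain ⟨ψ, hψ, hlim⟩ := hcluster.tendsto_subseq
    exact ⟨fun n => ψ (n + 1), fun a b hab => hψ (Nat.succ_lt_succ hab),
      fun n => (Nat.zero_le _).trans_lt (hψ n.succ_pos), (tendsto_add_atTop_iff_nat 1).2 hlim⟩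

/-- A point `x` of a compact metric dynamical system `(X, T)` is recurrent
(there is an increasing sequence `kₙ` of positive integers with `T^[kₙ] x → x`)
iff for every open neighborhood `U` of `x` the entering time set
`N(x, U) = {n > 0 : T^[n] x ∈ U}` contains an IP-set. -/
theorem stmt7 {X : Type*} [MetricSpace X] [CompactSpace X] (T : X ≃ₜ X) (x : X) :
    (∃ k : ℕ → ℕ, StrictMono k ∧ (∀ n, 0 < k n) ∧
      Filter.Tendsto (fun n => (⇑T)^[k n] x) Filter.atTop (nhds x)) ↔
    (∀ U : Set X, IsOpen U → x ∈ U →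
      ∃ p : ℕ → ℕ, (∀ i, 0 < p i) ∧
        ∀ s : Finset ℕ, s.Nonempty →
          (∑ i ∈ s, p i) ∈ {n : ℕ | 0 < n ∧ (⇑T)^[n] x ∈ U}) :=
  stmt7_general T x
end

section
/- A dynamical system (X,T) is weakly mixing (i.e., X × X with T × T is topologically transitive) if and only if for every pair of non-empty open subsets U, V of X, the hitting time set N(U,V) is thick. -/
/-!
Weak mixing is equivalent to `N(A₁, B₁) ∩ N(A₂, B₂) ≠ ∅` for all non-empty open `A₁, A₂, B₁, B₂`
(test transitivity of `T × T` on open rectangles). The key observation is that a time `k` with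
`A₁ ∩ T^{-a} A₂` hitting `B₁ ∩ T^{-(a+d)} B₂` witnesses both `k ∈ N(A₁, B₁)` and
`k + d ∈ N(A₂, B₂)`.

If `T` is weakly mixing, `a ∈ N(A₁, A₂) ∩ N(B₁, B₂)` makes these intersections non-empty, so (with
`d = 0`) the sets `N(U, V)` form a filter base; intersecting `N(U, T^{-i} V)` for `i ≤ m` yields
runs `k, …, k + m` in `N(U, V)`. Conversely, if all `N(U, V)` are thick, pick `a ∈ N(A₁, A₂)` and
`a + d ∈ N(B₁, B₂)`; thickness of `N(A₁ ∩ T^{-a} A₂, B₁ ∩ T^{-(a+d)} B₂)` gives a `k` with `k` and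
`k + d` both in it, and then `k + d ∈ N(A₁, B₁) ∩ N(A₂, B₂)`.
-/

open Set Function

def IsThick (s : Set ℕ) : Prop :=
  ∀ m, ∃ k, ∀ i ≤ m, k + i ∈ s

section Hitting

variable {X : Type*} (f : X → X)

def hittingTimes (U V : Set X) : Set ℕ :=
  {n | 0 < n ∧ (U ∩ f^[n] ⁻¹' V).Nonempty}

variable {f}

theorem hittingTimes_mono {U U' V V' : Set X} (hU : U ⊆ U') (hV : V ⊆ V') :
    hittingTimes f U V ⊆ hittingTimes f U' V' := fun _ ⟨hn, x, hxU, hxV⟩ =>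
  ⟨hn, x, hU hxU, hV hxV⟩

theorem hittingTimes_prodMap {Y : Type*} (g : Y → Y) (U₁ V₁ : Set X) (U₂ V₂ : Set Y) :
    hittingTimes (Prod.map f g) (U₁ ×ˢ U₂) (V₁ ×ˢ V₂) =
      hittingTimes f U₁ V₁ ∩ hittingTimes g U₂ V₂ := by
  ext n
  simp only [hittingTimes, mem_ofPred_eq, mem_inter_iff, Prod.map_iterate, preimage_prod_map_prod,
    prod_inter_prod, prod_nonempty_iff]
  tauto

theorem add_mem_hittingTimes_of_mem_preimage {U V : Set X} {k i : ℕ}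
    (hk : k ∈ hittingTimes f U (f^[i] ⁻¹' V)) : k + i ∈ hittingTimes f U V := by
  obtain ⟨hk, x, hxU, hxV⟩ := hk
  refine ⟨by omega, x, hxU, ?_⟩
  rwa [mem_preimage, add_comm, iterate_add_apply]

theorem add_mem_hittingTimes_of_mem_inter_preimage {A₁ A₂ B₁ B₂ : Set X} {a d k : ℕ}
    (hk : k ∈ hittingTimes f (A₁ ∩ f^[a] ⁻¹' A₂) (B₁ ∩ f^[a + d] ⁻¹' B₂)) :
    k + d ∈ hittingTimes f A₂ B₂ := by
  obtain ⟨hk, x, ⟨-, hxA₂⟩, -, hxB₂⟩ := hk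
  refine ⟨by omega, f^[a] x, hxA₂, ?_⟩
  rw [mem_preimage, ← iterate_add_apply, show k + d + a = a + d + k by omega, iterate_add_apply]
  exact hxB₂

end Hitting

section WeakMixing

variable {X : Type*} [TopologicalSpace X] {f : X → X}

def IsTopTransitive (f : X → X) : Prop :=
  ∀ U V : Set X, IsOpen U → IsOpen V → U.Nonempty → V.Nonempty → (hittingTimes f U V).Nonempty

def IsWeaklyMixing (f : X → X) : Prop :=
  IsTopTransitive (Prod.map f f)

theorem isWeaklyMixing_iff_nonempty_inter_hittingTimes :
    IsWeaklyMixing f ↔ ∀ A₁ A₂ B₁ B₂ : Set X, IsOpen A₁ → IsOpen A₂ → IsOpen B₁ → IsOpen B₂ →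
      A₁.Nonempty → A₂.Nonempty → B₁.Nonempty → B₂.Nonempty →
      (hittingTimes f A₁ B₁ ∩ hittingTimes f A₂ B₂).Nonempty := by
  constructor
  · intro h A₁ A₂ B₁ B₂ hA₁ hA₂ hB₁ hB₂ hA₁n hA₂n hB₁n hB₂n
    rw [← hittingTimes_prodMap]
    exact h _ _ (hA₁.prod hA₂) (hB₁.prod hB₂) (hA₁n.prod hA₂n) (hB₁n.prod hB₂n)
  · intro h W₁ W₂ hW₁ hW₂ ⟨⟨a₁, a₂⟩, ha⟩ ⟨⟨b₁, b₂⟩, hb⟩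
    obtain ⟨A₁, A₂, hA₁, hA₂, ha₁, ha₂, hA⟩ := isOpen_prod_iff.mp hW₁ a₁ a₂ ha
    obtain ⟨B₁, B₂, hB₁, hB₂, hb₁, hb₂, hB⟩ := isOpen_prod_iff.mp hW₂ b₁ b₂ hb
    obtain ⟨n, hn⟩ := h A₁ A₂ B₁ B₂ hA₁ hA₂ hB₁ hB₂ ⟨a₁, ha₁⟩ ⟨a₂, ha₂⟩ ⟨b₁, hb₁⟩ ⟨b₂, hb₂⟩
    rw [← hittingTimes_prodMap] at hn
    exact ⟨n, hittingTimes_mono hA hB hn⟩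

theorem IsWeaklyMixing.isTopTransitive (h : IsWeaklyMixing f) : IsTopTransitive f :=
  fun U V hU hV hUn hVn =>
    (isWeaklyMixing_iff_nonempty_inter_hittingTimes.mp h U U V V hU hU hV hV hUn hUn hVn hVn).mono
      inter_subset_left

theorem IsWeaklyMixing.exists_hittingTimes_subset_inter (h : IsWeaklyMixing f)
    (hf : Continuous f) {A₁ A₂ B₁ B₂ : Set X} (hA₁ : IsOpen A₁) (hA₂ : IsOpen A₂)
    (hB₁ : IsOpen B₁) (hB₂ : IsOpen B₂) (hA₁n : A₁.Nonempty) (hA₂n : A₂.Nonempty)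
    (hB₁n : B₁.Nonempty) (hB₂n : B₂.Nonempty) :
    ∃ U V : Set X, IsOpen U ∧ IsOpen V ∧ U.Nonempty ∧ V.Nonempty ∧
      hittingTimes f U V ⊆ hittingTimes f A₁ B₁ ∩ hittingTimes f A₂ B₂ := by
  obtain ⟨a, ⟨-, hA⟩, -, hB⟩ := isWeaklyMixing_iff_nonempty_inter_hittingTimes.mp h
    A₁ B₁ A₂ B₂ hA₁ hB₁ hA₂ hB₂ hA₁n hB₁n hA₂n hB₂n
  refine ⟨A₁ ∩ f^[a] ⁻¹' A₂, B₁ ∩ f^[a] ⁻¹' B₂, hA₁.inter (hA₂.preimage (hf.iterate a)),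
    hB₁.inter (hB₂.preimage (hf.iterate a)), hA, hB, fun k hk => ⟨?_, ?_⟩⟩
  · exact hittingTimes_mono inter_subset_left inter_subset_left hk
  · exact add_mem_hittingTimes_of_mem_inter_preimage (a := a) (d := 0) hk

theorem IsWeaklyMixing.exists_hittingTimes_subset_of_le (h : IsWeaklyMixing f)
    (hf : Continuous f) {A B : ℕ → Set X} (hA : ∀ i, IsOpen (A i)) (hB : ∀ i, IsOpen (B i))
    (hAn : ∀ i, (A i).Nonempty) (hBn : ∀ i, (B i).Nonempty) (m : ℕ) :
    ∃ U V : Set X, IsOpen U ∧ IsOpen V ∧ U.Nonempty ∧ V.Nonempty ∧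
      ∀ k ∈ hittingTimes f U V, ∀ i ≤ m, k ∈ hittingTimes f (A i) (B i) := by
  induction m with
  | zero =>
    refine ⟨A 0, B 0, hA 0, hB 0, hAn 0, hBn 0, fun k hk i hi => ?_⟩
    rwa [Nat.le_zero.mp hi]
  | succ m ih =>
    obtain ⟨U, V, hU, hV, hUn, hVn, hUV⟩ := ih
    obtain ⟨U', V', hU', hV', hU'n, hV'n, hsub⟩ := h.exists_hittingTimes_subset_inter hf
      hU (hA (m + 1)) hV (hB (m + 1)) hUn (hAn _) hVn (hBn _)
    refine ⟨U', V', hU', hV', hU'n, hV'n, fun k hk i hi => ?_⟩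
    obtain ⟨hkUV, hkm⟩ := hsub hk
    rcases Nat.le_succ_iff.mp hi with hi | rfl
    exacts [hUV k hkUV i hi, hkm]

theorem IsWeaklyMixing.isThick_hittingTimes (h : IsWeaklyMixing f) (hf : Continuous f)
    (hsurj : Surjective f) {U V : Set X} (hU : IsOpen U) (hV : IsOpen V) (hUn : U.Nonempty)
    (hVn : V.Nonempty) : IsThick (hittingTimes f U V) := by
  intro m
  obtain ⟨U', V', hU', hV', hU'n, hV'n, hsub⟩ :=
    h.exists_hittingTimes_subset_of_le hf (A := fun _ => U) (B := fun i => f^[i] ⁻¹' V)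
      (fun _ => hU) (fun i => hV.preimage (hf.iterate i)) (fun _ => hUn)
      (fun i => hVn.preimage (hsurj.iterate i)) m
  obtain ⟨k, hk⟩ := h.isTopTransitive U' V' hU' hV' hU'n hV'n
  exact ⟨k, fun i hi => add_mem_hittingTimes_of_mem_preimage (hsub k hk i hi)⟩

theorem isWeaklyMixing_of_forall_isThick (hf : Continuous f)
    (h : ∀ U V : Set X, IsOpen U → IsOpen V → U.Nonempty → V.Nonempty →
      IsThick (hittingTimes f U V)) : IsWeaklyMixing f := by
  refine isWeaklyMixing_iff_nonempty_inter_hittingTimes.mpr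
    fun A₁ A₂ B₁ B₂ hA₁ hA₂ hB₁ hB₂ hA₁n hA₂n hB₁n hB₂n => ?_
  obtain ⟨a, ha⟩ := h A₁ A₂ hA₁ hA₂ hA₁n hA₂n 0
  obtain ⟨d, hd⟩ := h B₁ B₂ hB₁ hB₂ hB₁n hB₂n a
  obtain ⟨-, hUn⟩ := ha 0 le_rfl
  obtain ⟨-, hVn⟩ := hd a le_rfl
  rw [add_comm] at hVn
  obtain ⟨k, hk⟩ := h (A₁ ∩ f^[a] ⁻¹' A₂) (B₁ ∩ f^[a + d] ⁻¹' B₂)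
    (hA₁.inter (hA₂.preimage (hf.iterate a))) (hB₁.inter (hB₂.preimage (hf.iterate _)))
    hUn hVn d
  exact ⟨k + d, hittingTimes_mono inter_subset_left inter_subset_left (hk d le_rfl),
    add_mem_hittingTimes_of_mem_inter_preimage (hk 0 (Nat.zero_le d))⟩

theorem isWeaklyMixing_iff_forall_isThick (hf : Continuous f) (hsurj : Surjective f) :
    IsWeaklyMixing f ↔ ∀ U V : Set X, IsOpen U → IsOpen V → U.Nonempty → V.Nonempty →
      IsThick (hittingTimes f U V) :=
  ⟨fun h _ _ hU hV hUn hVn => h.isThick_hittingTimes hf hsurj hU hV hUn hVn,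
    isWeaklyMixing_of_forall_isThick hf⟩

end WeakMixing

theorem stmt10_general {X : Type*} [MetricSpace X]
    (T : X ≃ₜ X) :
    (∀ W₁ W₂ : Set (X × X), IsOpen W₁ → IsOpen W₂ → W₁.Nonempty → W₂.Nonempty →
      ∃ n : ℕ, 0 < n ∧
        (W₁ ∩ (fun p : X × X => (T p.1, T p.2))^[n] ⁻¹' W₂).Nonempty) ↔
    (∀ U V : Set X, IsOpen U → IsOpen V → U.Nonempty → V.Nonempty →
      ∀ m : ℕ, ∃ k : ℕ, ∀ i ≤ m,
        (k + i) ∈ {n : ℕ | 0 < n ∧ (U ∩ (⇑T)^[n] ⁻¹' V).Nonempty}) :=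
  isWeaklyMixing_iff_forall_isThick T.continuous T.surjective

/-- A non-trivial compact metric dynamical system `(X, T)` is weakly mixing
(the product system `(X × X, T × T)` is topologically transitive) iff for every
pair of non-empty open sets `U, V ⊆ X` the hitting time set
`N(U, V) = {n > 0 : U ∩ T^[-n] V ≠ ∅}` is thick. -/
theorem stmt10 {X : Type*} [MetricSpace X] [CompactSpace X] [Nontrivial X]
    (T : X ≃ₜ X) :
    (∀ W₁ W₂ : Set (X × X), IsOpen W₁ → IsOpen W₂ → W₁.Nonempty → W₂.Nonempty →
      ∃ n : ℕ, 0 < n ∧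
        (W₁ ∩ (fun p : X × X => (T p.1, T p.2))^[n] ⁻¹' W₂).Nonempty) ↔
    (∀ U V : Set X, IsOpen U → IsOpen V → U.Nonempty → V.Nonempty →
      ∀ m : ℕ, ∃ k : ℕ, ∀ i ≤ m,
        (k + i) ∈ {n : ℕ | 0 < n ∧ (U ∩ (⇑T)^[n] ⁻¹' V).Nonempty}) :=
  stmt10_general T
end

section
/- If A is an F-mixing subset of a dynamical system (X,T) for a proper Furstenberg family F consisting of infinite sets, then A is a perfect set (closed with no isolated points). -/
/-!
If `x ∈ A` were isolated in `A`, pick an open `U` with `U ∩ A = {x}` and two distinct points of `A`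
with disjoint open neighbourhoods `V`, `W`. Every time in `N(U ∩ A, V) ∩ N(U ∩ A, W)` sends `x` into
both `V` and `W`, so this set is empty, while mixing puts it in the proper family `F`.
-/

/-- The hitting time set `N(U, V) = {n > 0 : U ∩ T^[-n] V ≠ ∅}`. -/
def hitting {X : Type*} (T : X → X) (U V : Set X) : Set ℕ :=
  {n : ℕ | 0 < n ∧ (U ∩ T^[n] ⁻¹' V).Nonempty}

open Filter Topology

lemma iterate_mem_of_mem_hitting_of_subset_singleton {X : Type*} {f : X → X} {U V : Set X}
    {x : X} (hU : U ⊆ {x}) {n : ℕ} (hn : n ∈ hitting f U V) : f^[n] x ∈ V := by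
  obtain ⟨-, y, hyU, hyV⟩ := hn
  rwa [← hU hyU]

lemma hitting_inter_hitting_eq_empty_of_subset_singleton {X : Type*} {f : X → X}
    {U V W : Set X} {x : X} (hU : U ⊆ {x}) (hVW : Disjoint V W) :
    hitting f U V ∩ hitting f U W = ∅ :=
  Set.eq_empty_of_forall_notMem fun _ ⟨hV, hW⟩ =>
    Set.disjoint_left.mp hVW (iterate_mem_of_mem_hitting_of_subset_singleton hU hV)
      (iterate_mem_of_mem_hitting_of_subset_singleton hU hW)

lemma exists_isOpen_inter_subset_singleton_of_not_accPt {X : Type*} [TopologicalSpace X]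
    {x : X} {C : Set X} (h : ¬AccPt x (𝓟 C)) : ∃ U, IsOpen U ∧ x ∈ U ∧ U ∩ C ⊆ {x} := by
  simp only [accPt_iff_nhds, not_forall, not_exists, not_and, not_not] at h
  obtain ⟨N, hN, hNC⟩ := h
  obtain ⟨U, hUN, hU, hxU⟩ := mem_nhds_iff.mp hN
  exact ⟨U, hU, hxU, fun y hy => hNC y ⟨hUN hy.1, hy.2⟩⟩

theorem stmt12_general {X : Type*} [MetricSpace X] (T : X ≃ₜ X)
    (F : Set (Set ℕ))
    (hproper : ∅ ∉ F)
    (A : Set X) (hA : IsClosed A)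
    (htwo : ∃ a ∈ A, ∃ b ∈ A, a ≠ b)
    (hmix : ∀ (k : ℕ) (U V : Fin k → Set X),
      (∀ i, IsOpen (U i) ∧ (U i ∩ A).Nonempty ∧ IsOpen (V i) ∧ (V i ∩ A).Nonempty) →
      (⋂ i, hitting (⇑T) (U i ∩ A) (V i)) ∈ F) :
    Perfect A := by
  refine ⟨hA, fun x hx => by_contra fun hacc => ?_⟩
  obtain ⟨U, hU, hxU, hUA⟩ := exists_isOpen_inter_subset_singleton_of_not_accPt hacc
  obtain ⟨a, ha, b, hb, hab⟩ := htwo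
  obtain ⟨V, W, hV, hW, haV, hbW, hVW⟩ := t2_separation hab
  have hmem := hmix 2 ![U, U] ![V, W] fun i => by
    fin_cases i
    exacts [⟨hU, ⟨x, hxU, hx⟩, hV, ⟨a, haV, ha⟩⟩, ⟨hU, ⟨x, hxU, hx⟩, hW, ⟨b, hbW, hb⟩⟩]
  have hempty : (⋂ i, hitting (⇑T) (![U, U] i ∩ A) (![V, W] i)) = ∅ :=
    Set.subset_eq_empty (s := hitting T (U ∩ A) V ∩ hitting T (U ∩ A) W)
      (fun n hn => ⟨Set.mem_iInter.mp hn 0, Set.mem_iInter.mp hn 1⟩)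
      (hitting_inter_hitting_eq_empty_of_subset_singleton hUA hVW)
  exact hproper (hempty ▸ hmem)

/-- If `A` is an `F`-mixing subset of a compact metric dynamical system `(X, T)`
for a proper Furstenberg family `F` consisting of infinite sets, then `A` is a
perfect set. -/
theorem stmt12 {X : Type*} [MetricSpace X] [CompactSpace X] (T : X ≃ₜ X)
    (F : Set (Set ℕ))
    (hered : ∀ A B : Set ℕ, A ⊆ B → A ∈ F → B ∈ F)
    (hproper : ∅ ∉ F)
    (hinf : ∀ A ∈ F, A.Infinite)
    (A : Set X) (hA : IsClosed A)
    (htwo : ∃ a ∈ A, ∃ b ∈ A, a ≠ b)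
    (hmix : ∀ (k : ℕ) (U V : Fin k → Set X),
      (∀ i, IsOpen (U i) ∧ (U i ∩ A).Nonempty ∧ IsOpen (V i) ∧ (V i ∩ A).Nonempty) →
      (⋂ i, hitting (⇑T) (U i ∩ A) (V i)) ∈ F) :
    Perfect A :=
  stmt12_general T F hproper A hA htwo hmix
end

section
/- Let X be a compact metric space without isolated points and R a G_δ subset of X^n. Then the collection of closed R-dependent subsets of X is a G_δ subset of the hyperspace 2^X, where a set K with at least n points is R-dependent if every n-tuple of pairwise distinct elements of K lies in R. -/
/-!
Having `n` distinct points is an open condition on `K`. For the other condition, a finite tuple is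
injective iff it is `δ`-separated for some `δ > 0`, so `K` is `R`-dependent iff, for every open `U`
in a countable family with intersection `R` and every `k`, all `1/(k+1)`-separated tuples of `K`
lie in `U`. This condition is not open in `K`, but it is squeezed between open ones: the
`δ'`-separated tuples of `K` form a compact set, so if they lie in `U` then so does a uniform
neighbourhood of them, and for `δ > δ'` this neighbourhood contains the `δ`-separated tuples of
every compactum Hausdorff-close to `K`. Hence the intersection over `k` is one of interiors.
-/

open Set Filter Topology Metric TopologicalSpace

section SeparatedTuples

variable {ι X : Type*}

def separatedTuples (ι X : Type*) [PseudoMetricSpace X] (δ : ℝ) : Set (ι → X) :=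
  {x | ∀ i j, i ≠ j → δ ≤ dist (x i) (x j)}

variable [PseudoMetricSpace X]

theorem isClosed_separatedTuples (δ : ℝ) : IsClosed (separatedTuples ι X δ) := by
  simp only [separatedTuples, ofPred_forall]
  exact isClosed_iInter fun i => isClosed_iInter fun j => isClosed_iInter fun _ =>
    isClosed_le continuous_const ((continuous_apply i).dist (continuous_apply j))

theorem separatedTuples_anti {δ δ' : ℝ} (h : δ' ≤ δ) :
    separatedTuples ι X δ ⊆ separatedTuples ι X δ' :=
  fun _ hx i j hij => h.trans (hx i j hij)

theorem injective_of_mem_separatedTuples {δ : ℝ} (hδ : 0 < δ) {x : ι → X}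
    (hx : x ∈ separatedTuples ι X δ) : Function.Injective x := by
  intro i j hxij
  by_contra hij
  have := hx i j hij
  rw [hxij, dist_self] at this
  linarith

theorem mem_separatedTuples_of_forall_dist_lt {δ ε : ℝ} {x y : ι → X}
    (hx : x ∈ separatedTuples ι X δ) (hxy : ∀ i, dist (x i) (y i) < ε) :
    y ∈ separatedTuples ι X (δ - 2 * ε) := by
  intro i j hij
  have := dist_triangle4 (x i) (y i) (y j) (x j)
  rw [dist_comm (y j)] at this
  linarith [hx i j hij, hxy i, hxy j]

end SeparatedTuples

section SeparatedTuplesMetric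

variable {ι X : Type*} [MetricSpace X]

theorem exists_pos_mem_separatedTuples [Finite ι] {x : ι → X}
    (hx : Function.Injective x) : ∃ δ > 0, x ∈ separatedTuples ι X δ := by
  have hsmall : ∀ᶠ δ in 𝓝 (0 : ℝ), ∀ i j, i ≠ j → δ ≤ dist (x i) (x j) := by
    simp only [eventually_all]
    exact fun i j hij => eventually_le_nhds (dist_pos.2 (hx.ne hij))
  obtain ⟨δ, hδ, hδ0⟩ := ((hsmall.filter_mono nhdsWithin_le_nhds).and
    (self_mem_nhdsWithin : ∀ᶠ δ in 𝓝[>] (0 : ℝ), 0 < δ)).exists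
  exact ⟨δ, hδ0, hδ⟩

theorem setOf_injective_eq_iUnion_separatedTuples [Finite ι] :
    {x : ι → X | Function.Injective x} = ⋃ k : ℕ, separatedTuples ι X (1 / (k + 1)) := by
  ext x
  simp only [mem_ofPred_eq, mem_iUnion]
  refine ⟨fun hx => ?_, fun ⟨k, hk⟩ => injective_of_mem_separatedTuples (by positivity) hk⟩
  obtain ⟨δ, hδ, hxδ⟩ := exists_pos_mem_separatedTuples hx
  obtain ⟨k, hk⟩ := exists_nat_one_div_lt hδ
  exact ⟨k, separatedTuples_anti hk.le hxδ⟩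

end SeparatedTuplesMetric

namespace TopologicalSpace.NonemptyCompacts

variable {ι X : Type*} [MetricSpace X]

theorem exists_forall_dist_lt_of_dist_lt {K K' : NonemptyCompacts X} {ε : ℝ}
    (hKK' : dist K K' < ε) {x : ι → X} (hx : ∀ i, x i ∈ (K : Set X)) :
    ∃ y : ι → X, (∀ i, y i ∈ (K' : Set X)) ∧ ∀ i, dist (x i) (y i) < ε := by
  choose y hyK' hxy using fun i =>
    exists_dist_lt_of_hausdorffDist_lt (hx i) hKK' (edist_ne_top K K')
  exact ⟨y, hyK', hxy⟩

theorem isOpen_setOf_exists_embedding [Finite ι] :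
    IsOpen {K : NonemptyCompacts X | ∃ f : ι ↪ X, ∀ i, f i ∈ (K : Set X)} := by
  refine Metric.isOpen_iff.2 fun K ⟨f, hf⟩ => ?_
  obtain ⟨δ, hδ, hfδ⟩ := exists_pos_mem_separatedTuples f.injective
  refine ⟨δ / 3, by positivity, fun K' hK' => ?_⟩
  obtain ⟨y, hyK', hfy⟩ := exists_forall_dist_lt_of_dist_lt
    (by rwa [mem_ball, dist_comm] at hK') hf
  have hyδ : y ∈ separatedTuples ι X (δ - 2 * (δ / 3)) :=
    mem_separatedTuples_of_forall_dist_lt hfδ hfy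
  exact ⟨⟨y, injective_of_mem_separatedTuples (by linarith) hyδ⟩, hyK'⟩

theorem eventually_pi_inter_separatedTuples_subset [Fintype ι] {V : Set (ι → X)}
    (hV : IsOpen V) {δ' δ : ℝ} (hδ : δ' < δ) {K : NonemptyCompacts X}
    (hK : univ.pi (fun _ => (K : Set X)) ∩ separatedTuples ι X δ' ⊆ V) :
    ∀ᶠ K' : NonemptyCompacts X in 𝓝 K,
      univ.pi (fun _ => (K' : Set X)) ∩ separatedTuples ι X δ ⊆ V := by
  have hcompact : IsCompact (univ.pi (fun _ => (K : Set X)) ∩ separatedTuples ι X δ') :=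
    (isCompact_univ_pi fun _ => K.isCompact).inter_right (isClosed_separatedTuples δ')
  obtain ⟨ρ, hρ, hρV⟩ := hcompact.exists_thickening_subset_open hV hK
  have hε : 0 < min ρ ((δ - δ') / 2) := lt_min hρ (by linarith)
  refine Metric.eventually_nhds_iff.2 ⟨_, hε, fun K' hK' x ⟨hxK', hxδ⟩ => hρV ?_⟩
  obtain ⟨y, hyK, hxy⟩ := exists_forall_dist_lt_of_dist_lt hK' fun i => hxK' i (mem_univ i)
  have hyδ' : y ∈ separatedTuples ι X δ' :=
    separatedTuples_anti (by linarith [min_le_right ρ ((δ - δ') / 2)])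
      (mem_separatedTuples_of_forall_dist_lt hxδ hxy)
  refine mem_thickening_iff.2 ⟨y, ⟨fun i _ => hyK i, hyδ'⟩, ?_⟩
  exact (dist_pi_lt_iff hρ).2 fun i => (hxy i).trans_le (min_le_left _ _)

theorem isGδ_setOf_forall_injective_mem_of_isOpen [Fintype ι] {V : Set (ι → X)}
    (hV : IsOpen V) :
    IsGδ {K : NonemptyCompacts X |
      ∀ x : ι → X, (∀ i, x i ∈ (K : Set X)) → Function.Injective x → x ∈ V} := by
  suffices h : {K : NonemptyCompacts X |
      ∀ x : ι → X, (∀ i, x i ∈ (K : Set X)) → Function.Injective x → x ∈ V} =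
      ⋂ k : ℕ, interior {K : NonemptyCompacts X |
        univ.pi (fun _ => (K : Set X)) ∩ separatedTuples ι X (1 / (k + 1)) ⊆ V} by
    rw [h]
    exact IsGδ.iInter fun k => isOpen_interior.isGδ
  ext K
  simp only [mem_iInter]
  refine ⟨fun hK k => mem_interior_iff_mem_nhds.2 ?_, fun hK x hxK hx => ?_⟩
  · refine eventually_pi_inter_separatedTuples_subset hV (δ' := 1 / (k + 2))
      (by gcongr; linarith) ?_
    rintro x ⟨hxK, hxδ⟩
    exact hK x (fun i => hxK i (mem_univ i))
      (injective_of_mem_separatedTuples (by positivity) hxδ)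
  · obtain ⟨k, hk⟩ := mem_iUnion.1 (setOf_injective_eq_iUnion_separatedTuples.subset hx)
    exact interior_subset (hK k) ⟨fun i _ => hxK i, hk⟩

theorem isGδ_setOf_forall_injective_mem [Fintype ι] {R : Set (ι → X)} (hR : IsGδ R) :
    IsGδ {K : NonemptyCompacts X |
      ∀ x : ι → X, (∀ i, x i ∈ (K : Set X)) → Function.Injective x → x ∈ R} := by
  obtain ⟨U, hU, rfl⟩ := hR.eq_iInter_nat
  convert IsGδ.iInter fun m =>
    isGδ_setOf_forall_injective_mem_of_isOpen (X := X) (hU m) using 1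
  ext K
  simp only [mem_ofPred_eq, mem_iInter]
  exact ⟨fun hK m x hxK hx => hK x hxK hx m, fun hK x hxK hx m => hK m x hxK hx⟩

end TopologicalSpace.NonemptyCompacts

theorem stmt14_general {X : Type*} [MetricSpace X]
    (n : ℕ) (R : Set (Fin n → X)) (hR : IsGδ R) :
    IsGδ {K : NonemptyCompacts X |
      (∃ f : Fin n ↪ X, ∀ i, f i ∈ (K : Set X)) ∧
      ∀ x : Fin n → X, (∀ i, x i ∈ (K : Set X)) → Function.Injective x → x ∈ R} :=
  NonemptyCompacts.isOpen_setOf_exists_embedding.isGδ.inter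
    (NonemptyCompacts.isGδ_setOf_forall_injective_mem hR)

/-- Let `X` be a compact metric space without isolated points and `R` a Gδ
subset of `X^n`. Then the collection of closed `R`-dependent subsets of `X`
(sets with at least `n` points all of whose `n`-tuples of pairwise distinct
elements lie in `R`) is a Gδ subset of the hyperspace `2^X`. -/
theorem stmt14 {X : Type*} [MetricSpace X] [CompactSpace X]
    (hX : Preperfect (Set.univ : Set X))
    (n : ℕ) (R : Set (Fin n → X)) (hR : IsGδ R) :
    IsGδ {K : NonemptyCompacts X |
      (∃ f : Fin n ↪ X, ∀ i, f i ∈ (K : Set X)) ∧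
      ∀ x : Fin n → X, (∀ i, x i ∈ (K : Set X)) → Function.Injective x → x ∈ R} :=
  stmt14_general n R hR
end

section
/- Let π : X → Y be an open continuous surjection between compact metric spaces. If E ⊆ X is a dense G_δ set, then there exists a dense G_δ subset Y₀ of Y such that for each y ∈ Y₀, the set E ∩ π^{-1}(y) is a dense G_δ subset of the fiber π^{-1}(y). -/
/-!
Write `E = ⋂ U` over a countable family of dense open sets and fix a countable basis of `X`.
For each such `U` and basic open `V`, the coborder `B(U, V)` of the open set `π(V ∩ U)` is
open and dense in `Y`, and since `π(V) ⊆ closure π(V ∩ U)`, every `y ∈ B(U, V) ∩ π(V)` lies in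
`π(V ∩ U)`. So on the dense Gδ set `Y₀ = ⋂ B(U, V)`, each `U` meets every basic open set that
meets the fibre over `y`, i.e. `U` is dense in the fibre; Baire's theorem in the compact fibre
finishes the proof.
-/

open Set TopologicalSpace

section

variable {X Y : Type*} [TopologicalSpace X] [TopologicalSpace Y] {f : X → Y}

lemma image_subset_closure_image_inter (hf : Continuous f) {U V : Set X} (hU : Dense U)
    (hV : IsOpen V) : f '' V ⊆ closure (f '' (V ∩ U)) :=
  calc f '' V ⊆ f '' closure (V ∩ U) := image_mono (hU.open_subset_closure_inter hV)
    _ ⊆ closure (f '' (V ∩ U)) := image_closure_subset_closure_image hf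

lemma mem_image_inter_of_mem_coborder (hf : Continuous f) {U V : Set X} (hU : Dense U)
    (hV : IsOpen V) {y : Y} (hy : y ∈ coborder (f '' (V ∩ U))) (hyV : y ∈ f '' V) :
    y ∈ f '' (V ∩ U) :=
  coborder_inter_closure.subset ⟨hy, image_subset_closure_image_inter hf hU hV hyV⟩

lemma dense_preimage_fiber_of_forall_mem_coborder (hf : Continuous f) {b : Set (Set X)}
    (hb : IsTopologicalBasis b) {U : Set X} (hU : Dense U) {y : Y}
    (hy : ∀ V ∈ b, y ∈ coborder (f '' (V ∩ U))) :
    Dense (Subtype.val ⁻¹' U : Set (f ⁻¹' {y})) := by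
  rw [Subtype.dense_iff, Subtype.image_preimage_coe]
  intro x hx
  rw [hb.mem_closure_iff]
  intro V hVb hxV
  obtain ⟨x', ⟨hx'V, hx'U⟩, hx'y⟩ :=
    mem_image_inter_of_mem_coborder hf hU (hb.isOpen hVb) (hy V hVb) ⟨x, hxV, hx⟩
  exact ⟨x', hx'V, hx'y, hx'U⟩

theorem exists_dense_isGδ_forall_dense_preimage_fiber [SecondCountableTopology X]
    [BaireSpace Y] (hf : Continuous f) (hfo : IsOpenMap f) {T : Set (Set X)}
    (hTc : T.Countable) (hTo : ∀ U ∈ T, IsOpen U) (hTd : ∀ U ∈ T, Dense U) :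
    ∃ Y₀ : Set Y, Dense Y₀ ∧ IsGδ Y₀ ∧
      ∀ y ∈ Y₀, ∀ U ∈ T, Dense (Subtype.val ⁻¹' U : Set (f ⁻¹' {y})) := by
  obtain ⟨b, hbc, -, hb⟩ := exists_countable_basis X
  have hBo : ∀ p ∈ T ×ˢ b, IsOpen (coborder (f '' (p.2 ∩ p.1))) := fun p hp =>
    (hfo _ ((hb.isOpen hp.2).inter (hTo _ hp.1))).isLocallyClosed.isOpen_coborder
  refine ⟨⋂ p ∈ T ×ˢ b, coborder (f '' (p.2 ∩ p.1)),
    dense_biInter_of_isOpen hBo (hTc.prod hbc) fun _ _ => dense_coborder,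
    IsGδ.biInter_of_isOpen (hTc.prod hbc) hBo, fun y hy U hU => ?_⟩
  exact dense_preimage_fiber_of_forall_mem_coborder hf hb (hTd U hU) fun V hV =>
    mem_iInter₂.mp hy (U, V) ⟨hU, hV⟩

end

theorem stmt15_general {X Y : Type*} [MetricSpace X] [CompactSpace X]
    [MetricSpace Y] [CompactSpace Y]
    (π : X → Y) (hc : Continuous π)
    (ho : IsOpenMap π) (E : Set X) (hdense : Dense E) (hGδ : IsGδ E) :
    ∃ Y₀ : Set Y, Dense Y₀ ∧ IsGδ Y₀ ∧ ∀ y ∈ Y₀,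
      Dense (Subtype.val ⁻¹' E : Set (π ⁻¹' {y})) ∧
      IsGδ (Subtype.val ⁻¹' E : Set (π ⁻¹' {y})) := by
  have ⟨T, hTo, hTc, hTE⟩ := hGδ
  have hTd : ∀ U ∈ T, Dense U := fun U hU => hdense.mono (hTE ▸ sInter_subset_of_mem hU)
  obtain ⟨Y₀, hY₀d, hY₀G, hfib⟩ :=
    exists_dense_isGδ_forall_dense_preimage_fiber hc ho hTc hTo hTd
  refine ⟨Y₀, hY₀d, hY₀G, fun y hy => ⟨?_, hGδ.preimage continuous_subtype_val⟩⟩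
  have : CompactSpace (π ⁻¹' {y}) :=
    isCompact_iff_compactSpace.mp (isClosed_singleton.preimage hc).isCompact
  rw [hTE, preimage_sInter]
  exact dense_biInter_of_isOpen (fun U hU => (hTo U hU).preimage continuous_subtype_val) hTc
    (hfib y hy)

/-- Let `π : X → Y` be an open continuous surjection between compact metric
spaces. If `E ⊆ X` is a dense Gδ set, then there is a dense Gδ subset `Y₀` of
`Y` such that for each `y ∈ Y₀`, the set `E ∩ π⁻¹(y)` is a dense Gδ subset of
the fiber `π⁻¹(y)`. -/
theorem stmt15 {X Y : Type*} [MetricSpace X] [CompactSpace X]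
    [MetricSpace Y] [CompactSpace Y]
    (π : X → Y) (hc : Continuous π) (hs : Function.Surjective π)
    (ho : IsOpenMap π) (E : Set X) (hdense : Dense E) (hGδ : IsGδ E) :
    ∃ Y₀ : Set Y, Dense Y₀ ∧ IsGδ Y₀ ∧ ∀ y ∈ Y₀,
      Dense (Subtype.val ⁻¹' E : Set (π ⁻¹' {y})) ∧
      IsGδ (Subtype.val ⁻¹' E : Set (π ⁻¹' {y})) :=
  stmt15_general π hc ho E hdense hGδ
end

section
/- Let π : (X,T) → (Y,S) be a factor map between dynamical systems that is not a homeomorphism, and suppose that for every n ≥ 2 the system (R_π^{(n)}, T^{(n)}) is transitive, where R_π^{(n)} = {(x₁,...,xₙ) ∈ X^n : π(x₁) = ⋯ = π(xₙ)}. Then the set of perfect members of the fiber space H_π is a dense G_δ subset of H_π. -/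
/-!
For `c > 0`, the nonempty compacta in which every point has another point at distance `< c`
form an open subset of the hyperspace, and the perfect compacta are the intersection of these
sets over `c = 1 / (n + 1)`; this gives the Gδ property. Since `H_π` is closed in the complete
hyperspace it is a Baire space, so it suffices that each of these open sets is dense in `H_π`.
As `π` is not injective, some fiber contains points `a ≠ b`. Given `A ∈ H_π` with a finite net
`x₁, …, x_N`, transitivity of `R_π^{(2N)}` from a product of small balls around the doubled
net to the product of balls around `a, b, a, b, …` produces points `wᵢ ≠ wᵢ'` of one fiber
close to `xᵢ`, separated because an iterate of `T` sends them near `a` and near `b`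
respectively. The finite set of these points is then close to `A` and lies in the open set.
-/

open TopologicalSpace Metric Set

section Transitivity

variable {X Y : Type*} [TopologicalSpace X]

/-- Topological transitivity of `T × ⋯ × T` on `R_π^{(ι)} = {x : ι → X | π ∘ x is constant}`,
with the open sets taken in the ambient product `ι → X`. -/
def IsFiberTransitive (T : X → X) (π : X → Y) (ι : Type*) : Prop :=
  ∀ U V : Set (ι → X), IsOpen U → IsOpen V →
    (U ∩ {x | ∀ i j, π (x i) = π (x j)}).Nonempty →
    (V ∩ {x | ∀ i j, π (x i) = π (x j)}).Nonempty →
    ∃ m : ℕ, 0 < m ∧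
      (U ∩ {x | ∀ i j, π (x i) = π (x j)} ∩ (fun x : ι → X => fun i => T (x i))^[m] ⁻¹' V).Nonempty

variable {T : X → X} {π : X → Y}

lemma IsFiberTransitive.of_equiv {ι κ : Type*} (h : IsFiberTransitive T π κ) (e : ι ≃ κ) :
    IsFiberTransitive T π ι := by
  intro U V hU hV ⟨u, huU, huR⟩ ⟨v, hvV, hvR⟩
  let Φ : (κ → X) → (ι → X) := fun x => x ∘ e
  have hΦ : Continuous Φ := continuous_pi fun i => continuous_apply (e i)
  have hΦ_symm (x : ι → X) : Φ (x ∘ e.symm) = x := funext fun i => congrArg x (e.symm_apply_apply i)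
  have hsemiconj : Function.Semiconj Φ (fun x i => T (x i)) (fun x i => T (x i)) := fun _ => rfl
  obtain ⟨m, hm, w, ⟨hwU, hwR⟩, hwV⟩ := h (Φ ⁻¹' U) (Φ ⁻¹' V) (hU.preimage hΦ) (hV.preimage hΦ)
    ⟨u ∘ e.symm, by simpa only [mem_preimage, hΦ_symm], fun _ _ => huR _ _⟩
    ⟨v ∘ e.symm, by simpa only [mem_preimage, hΦ_symm], fun _ _ => hvR _ _⟩
  refine ⟨m, hm, Φ w, ⟨hwU, fun _ _ => hwR _ _⟩, ?_⟩
  rw [mem_preimage, ← hsemiconj.iterate_right m w]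
  exact hwV

lemma IsFiberTransitive.of_fin (h : ∀ n, 2 ≤ n → IsFiberTransitive T π (Fin n))
    (ι : Type*) [Finite ι] (hι : 2 ≤ Nat.card ι) : IsFiberTransitive T π ι :=
  (h _ hι).of_equiv (Finite.equivFin ι)

end Transitivity

section Hyperspace

variable {X Y : Type*} [MetricSpace X]

lemma IsFiberTransitive.exists_separated_pairs_near {T : X → X} {π : X → Y}
    {ι : Type*} [Finite ι] (h : IsFiberTransitive T π (Bool × ι)) {a b : X} (hab : a ≠ b)
    (hπab : π a = π b) (x : ι → X) (hx : ∀ i j, π (x i) = π (x j)) {δ : ℝ} (hδ : 0 < δ) :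
    ∃ w : Bool × ι → X, (∀ p q, π (w p) = π (w q)) ∧ (∀ p, dist (w p) (x p.2) < δ) ∧
      ∀ i, w (false, i) ≠ w (true, i) := by
  set r := dist a b / 2
  have hr : 0 < r := half_pos (dist_pos.2 hab)
  let U : Set (Bool × ι → X) := univ.pi fun p => ball (x p.2) δ
  let V : Set (Bool × ι → X) := univ.pi fun p => ball (cond p.1 b a) r
  obtain ⟨m, -, w, ⟨hwU, hwR⟩, hwV⟩ := h U V
    (isOpen_set_pi finite_univ fun _ _ => isOpen_ball)
    (isOpen_set_pi finite_univ fun _ _ => isOpen_ball)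
    ⟨fun p => x p.2, fun _ _ => mem_ball_self hδ, fun _ _ => hx _ _⟩
    ⟨fun p => cond p.1 b a, fun _ _ => mem_ball_self hr,
      fun ⟨s, _⟩ ⟨s', _⟩ => by cases s <;> cases s' <;> simp [hπab]⟩
  have hiter (p : Bool × ι) : ((fun x : Bool × ι → X => fun i => T (x i))^[m] w) p = T^[m] (w p) :=
    (Function.Semiconj.iterate_right (f := fun x : Bool × ι → X => x p) (fun _ => rfl) m) w
  refine ⟨w, hwR, fun p => hwU p trivial, fun i hw => ?_⟩
  have ha : T^[m] (w (true, i)) ∈ ball a r := by simpa [hiter, hw] using hwV (false, i) trivial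
  have hb : T^[m] (w (true, i)) ∈ ball b r := by simpa [hiter] using hwV (true, i) trivial
  exact disjoint_left.1 (ball_disjoint_ball (add_halves (dist a b)).le) ha hb

def nonIsolatedWithin (c : ℝ) : Set (NonemptyCompacts X) :=
  {A | ∀ x ∈ A, ∃ y ∈ A, dist x y ∈ Ioo 0 c}

lemma IsCompact.exists_pos_forall_exists_dist_mem_Ioo {A : Set X} (hA : IsCompact A) {c : ℝ}
    (h : ∀ x ∈ A, ∃ y ∈ A, dist x y ∈ Ioo 0 c) :
    ∃ e > 0, ∀ x ∈ A, ∃ y ∈ A, dist x y ∈ Ioo (2 * e) (c - 2 * e) := by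
  let U : ℕ → Set X := fun n =>
    ⋃ y ∈ A, (dist · y) ⁻¹' Ioo (2 * (1 / (n + 1))) (c - 2 * (1 / (n + 1)))
  have hU_mono : Monotone U := by
    intro n k hnk
    have : (1 : ℝ) / (k + 1) ≤ 1 / (n + 1) := Nat.one_div_le_one_div hnk
    exact biUnion_mono subset_rfl fun y _ =>
      preimage_mono (Ioo_subset_Ioo (by linarith) (by linarith))
  have hAU : A ⊆ ⋃ n, U n := by
    intro x hx
    obtain ⟨y, hy, hxy0, hxyc⟩ := h x hx
    obtain ⟨n, hn⟩ := exists_nat_one_div_lt (lt_min hxy0 (sub_pos.2 hxyc) |> half_pos)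
    refine mem_iUnion.2 ⟨n, mem_biUnion hy ⟨?_, ?_⟩⟩ <;>
      linarith [min_le_left (dist x y) (c - dist x y), min_le_right (dist x y) (c - dist x y)]
  obtain ⟨n, hn⟩ := hA.elim_directed_cover U
    (fun n => isOpen_biUnion fun y _ => isOpen_Ioo.preimage (continuous_id.dist continuous_const))
    hAU hU_mono.directed_le
  exact ⟨1 / (n + 1), Nat.one_div_pos_of_nat, fun x hx => by
    simpa only [U, mem_iUnion₂, mem_preimage, exists_prop] using hn hx⟩

lemma isOpen_nonIsolatedWithin (c : ℝ) :
    IsOpen (nonIsolatedWithin c : Set (NonemptyCompacts X)) := by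
  refine Metric.isOpen_iff.2 fun A hA => ?_
  obtain ⟨e, he, hAe⟩ := A.isCompact.exists_pos_forall_exists_dist_mem_Ioo hA
  refine ⟨e, he, fun B hB x' hx' => ?_⟩
  rw [mem_ball, NonemptyCompacts.dist_eq] at hB
  have hfin := hausdorffEDist_ne_top_of_nonempty_of_bounded B.nonempty A.nonempty
    B.isCompact.isBounded A.isCompact.isBounded
  obtain ⟨x, hx, hx'x⟩ := exists_dist_lt_of_hausdorffDist_lt hx' hB hfin
  obtain ⟨y, hy, hxy⟩ := hAe x hx
  obtain ⟨y', hy', hyy'⟩ := exists_dist_lt_of_hausdorffDist_lt' hy hB hfin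
  refine ⟨y', hy', ?_, ?_⟩
  · linarith [hxy.1, dist_triangle4 x x' y' y, dist_comm x x', dist_comm y y']
  · linarith [hxy.2, dist_triangle4 x' x y y', dist_comm y y']

lemma setOf_perfect_eq_iInter_nonIsolatedWithin :
    {A : NonemptyCompacts X | Perfect (A : Set X)} = ⋂ n : ℕ, nonIsolatedWithin (1 / (n + 1)) := by
  ext A
  have hperfect : Perfect (A : Set X) ↔ Preperfect (A : Set X) :=
    ⟨Perfect.acc, fun h => ⟨A.isCompact.isClosed, h⟩⟩
  rw [mem_iInter]
  change Perfect (A : Set X) ↔ _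
  rw [hperfect, preperfect_iff_nhds]
  constructor
  · intro h n x hx
    obtain ⟨y, ⟨hyx, hy⟩, hne⟩ := h x hx _ (ball_mem_nhds x Nat.one_div_pos_of_nat)
    exact ⟨y, hy, dist_pos.2 hne.symm, mem_ball'.1 hyx⟩
  · intro h x hx U hU
    obtain ⟨r, hr, hball⟩ := Metric.mem_nhds_iff.1 hU
    obtain ⟨n, hn⟩ := exists_nat_one_div_lt hr
    obtain ⟨y, hy, hxy0, hxy⟩ := h n x hx
    exact ⟨y, ⟨hball (by rw [mem_ball, dist_comm]; linarith), hy⟩, (dist_pos.1 hxy0).symm⟩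

def fiberCompacts (π : X → Y) : Set (NonemptyCompacts X) :=
  {A | ∃ y, (A : Set X) ⊆ π ⁻¹' {y}}

lemma mem_fiberCompacts_iff_prod_subset {π : X → Y} {A : NonemptyCompacts X} :
    A ∈ fiberCompacts π ↔ (A ×ˢ A : Set (X × X)) ⊆ {p | π p.1 = π p.2} := by
  constructor
  · rintro ⟨y, hy⟩ ⟨x, x'⟩ ⟨hx, hx'⟩
    exact (hy hx).trans (hy hx').symm
  · intro h
    obtain ⟨x₀, hx₀⟩ := A.nonempty
    exact ⟨π x₀, fun x hx => h (mk_mem_prod hx hx₀)⟩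

lemma isClosed_fiberCompacts [TopologicalSpace Y] [T2Space Y] {π : X → Y} (hπ : Continuous π) :
    IsClosed (fiberCompacts π) := by
  have hK : IsClosed {p : X × X | π p.1 = π p.2} :=
    isClosed_eq (hπ.comp continuous_fst) (hπ.comp continuous_snd)
  have hsquare : Continuous fun A : NonemptyCompacts X => (A ×ˢ A).toCloseds :=
    NonemptyCompacts.continuous_toCloseds.comp
      (uniformContinuous_id.prod_nonemptyCompacts uniformContinuous_id).continuous
  convert (Closeds.isClosed_subsets_of_isClosed hK).preimage hsquare using 1
  ext A
  exact mem_fiberCompacts_iff_prod_subset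

lemma dense_preimage_nonIsolatedWithin {T : X → X} {π : X → Y}
    (htrans : ∀ n, 2 ≤ n → IsFiberTransitive T π (Fin n)) {a b : X} (hab : a ≠ b)
    (hπab : π a = π b) {c : ℝ} (hc : 0 < c) :
    Dense (Subtype.val ⁻¹' nonIsolatedWithin c : Set (fiberCompacts π)) := by
  refine Metric.dense_iff.2 fun ⟨A, y, hy⟩ ε hε => ?_
  obtain ⟨t, htA, htfin, hAt⟩ := A.isCompact.finite_cover_balls (show 0 < ε / 4 by positivity)
  have : Finite t := htfin.to_subtype
  have : Nonempty t := by
    obtain ⟨x, hx⟩ := A.nonempty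
    obtain ⟨i, hi, -⟩ := mem_iUnion₂.1 (hAt hx)
    exact ⟨⟨i, hi⟩⟩
  have hcard : 2 ≤ Nat.card (Bool × t) := by
    rw [Nat.card_prod, Nat.card_eq_fintype_card (α := Bool), Fintype.card_bool]
    have := Nat.card_pos (α := t)
    omega
  set δ := min (ε / 4) (c / 2)
  have hδ : 0 < δ := lt_min (by positivity) (by positivity)
  have hδε := min_le_left (ε / 4) (c / 2)
  have hδc := min_le_right (ε / 4) (c / 2)
  obtain ⟨w, hwπ, hwx, hwne⟩ :=
    (IsFiberTransitive.of_fin htrans _ hcard).exists_separated_pairs_near hab hπab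
      (fun i : t => (i : X)) (fun i j => (hy (htA i.2)).trans (hy (htA j.2)).symm) hδ
  let B : NonemptyCompacts X := ⟨⟨range w, (finite_range w).isCompact⟩, range_nonempty w⟩
  have hB : B ∈ fiberCompacts π :=
    ⟨π (w (false, Classical.arbitrary t)), forall_mem_range.2 fun p => hwπ p _⟩
  refine ⟨⟨B, hB⟩, ?_, forall_mem_range.2 fun ⟨s, i⟩ => ⟨w (!s, i), mem_range_self _, ?_, ?_⟩⟩
  · rw [mem_ball, Subtype.dist_eq, NonemptyCompacts.dist_eq]
    refine (hausdorffDist_le_of_mem_dist (half_pos hε).le ?_ ?_).trans_lt (half_lt_self hε)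
    · exact forall_mem_range.2 fun p => ⟨p.2, htA p.2.2, by linarith [hwx p]⟩
    · intro x hx
      obtain ⟨i, hi, hxi⟩ := mem_iUnion₂.1 (hAt hx)
      refine ⟨w (false, ⟨i, hi⟩), mem_range_self _, (dist_triangle x i _).trans ?_⟩
      linarith [mem_ball.1 hxi, dist_comm i (w (false, ⟨i, hi⟩)), hwx (false, ⟨i, hi⟩)]
  · exact dist_pos.2 (by cases s; exacts [hwne i, (hwne i).symm])
  · linarith [dist_triangle_right (w (s, i)) (w (!s, i)) i, hwx (s, i), hwx (!s, i)]

end Hyperspace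

theorem stmt17_general {X Y : Type*} [MetricSpace X] [CompactSpace X]
    [MetricSpace Y]
    (T : X ≃ₜ X) (π : X → Y) (hc : Continuous π)
    (hs : Function.Surjective π)
    (hnothomeo : ¬∃ h : X ≃ₜ Y, ⇑h = π)
    (htrans : ∀ n : ℕ, 2 ≤ n →
      ∀ U V : Set (Fin n → X), IsOpen U → IsOpen V →
        (U ∩ {x | ∀ i j, π (x i) = π (x j)}).Nonempty →
        (V ∩ {x | ∀ i j, π (x i) = π (x j)}).Nonempty →
        ∃ m : ℕ, 0 < m ∧
          (U ∩ {x | ∀ i j, π (x i) = π (x j)} ∩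
            (fun x : Fin n → X => fun i => T (x i))^[m] ⁻¹' V).Nonempty) :
    Dense {B : {A : NonemptyCompacts X // ∃ y : Y, (A : Set X) ⊆ π ⁻¹' {y}} |
        Perfect ((B : NonemptyCompacts X) : Set X)} ∧
    IsGδ {B : {A : NonemptyCompacts X // ∃ y : Y, (A : Set X) ⊆ π ⁻¹' {y}} |
        Perfect ((B : NonemptyCompacts X) : Set X)} := by
  obtain ⟨a, b, hπab, hab⟩ := Function.not_injective_iff.1 fun hinj =>
    hnothomeo ⟨hc.homeoOfEquivCompactToT2 (f := Equiv.ofBijective π ⟨hinj, hs⟩), rfl⟩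
  have : CompleteSpace (fiberCompacts π) := (isClosed_fiberCompacts hc).isComplete.completeSpace_coe
  have hperfect_eq : {B : fiberCompacts π | Perfect ((B : NonemptyCompacts X) : Set X)} =
      ⋂ n : ℕ, Subtype.val ⁻¹' nonIsolatedWithin (1 / (n + 1)) := by
    rw [← preimage_iInter, ← setOf_perfect_eq_iInter_nonIsolatedWithin]
    rfl
  have hopen (n : ℕ) :
      IsOpen (Subtype.val ⁻¹' nonIsolatedWithin (1 / (n + 1)) : Set (fiberCompacts π)) :=
    (isOpen_nonIsolatedWithin _).preimage continuous_subtype_val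
  change Dense {B : fiberCompacts π | _} ∧ IsGδ {B : fiberCompacts π | _}
  rw [hperfect_eq]
  exact ⟨dense_iInter_of_isOpen_nat hopen fun n =>
      dense_preimage_nonIsolatedWithin htrans hab hπab Nat.one_div_pos_of_nat,
    IsGδ.iInter fun n => (hopen n).isGδ⟩

/-- Let `π : (X, T) → (Y, S)` be a factor map between compact metric dynamical
systems which is not a homeomorphism, and suppose that for every `n ≥ 2` the
system `(R_π^{(n)}, T^{(n)})` is transitive, where
`R_π^{(n)} = {(x₁, …, xₙ) : π x₁ = ⋯ = π xₙ}`. Then the collection of perfect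
members of the fiber space `H_π` is a dense Gδ subset of `H_π`. -/
theorem stmt17 {X Y : Type*} [MetricSpace X] [CompactSpace X]
    [MetricSpace Y] [CompactSpace Y]
    (T : X ≃ₜ X) (S : Y ≃ₜ Y) (π : X → Y) (hc : Continuous π)
    (hs : Function.Surjective π) (hfac : ∀ x, π (T x) = S (π x))
    (hnothomeo : ¬∃ h : X ≃ₜ Y, ⇑h = π)
    (htrans : ∀ n : ℕ, 2 ≤ n →
      ∀ U V : Set (Fin n → X), IsOpen U → IsOpen V →
        (U ∩ {x | ∀ i j, π (x i) = π (x j)}).Nonempty →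
        (V ∩ {x | ∀ i j, π (x i) = π (x j)}).Nonempty →
        ∃ m : ℕ, 0 < m ∧
          (U ∩ {x | ∀ i j, π (x i) = π (x j)} ∩
            (fun x : Fin n → X => fun i => T (x i))^[m] ⁻¹' V).Nonempty) :
    Dense {B : {A : NonemptyCompacts X // ∃ y : Y, (A : Set X) ⊆ π ⁻¹' {y}} |
        Perfect ((B : NonemptyCompacts X) : Set X)} ∧
    IsGδ {B : {A : NonemptyCompacts X // ∃ y : Y, (A : Set X) ⊆ π ⁻¹' {y}} |
        Perfect ((B : NonemptyCompacts X) : Set X)} :=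
  stmt17_general T π hc hs hnothomeo htrans
end

section
/- If (X,T) is a transitive dynamical system admitting an invariant Borel probability measure with full support (an E-system), then every transitive point x is an F_{pubd}-transitive point: for every non-empty open U ⊆ X, the set N(x,U) = {n ∈ ℕ : T^n(x) ∈ U} has positive upper Banach density. -/
open Classical MeasureTheory

/-- The upper Banach density of a set of natural numbers. -/
noncomputable def upperBanachDensity (F : Set ℕ) : ℝ :=
  Filter.limsup
    (fun N : ℕ => ⨆ M : ℕ, (((Finset.Ico M (M + N)).filter (· ∈ F)).card : ℝ) / N)
    Filter.atTop

/-!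
By invariance, the number of times `n ∈ [1, N]` with `Tⁿ z ∈ U`, integrated over `z`, equals
`N μ(U)`, so some point `z` visits `U` at least `N μ(U)` times in `[1, N]`. The points sharing
those visits form an open set containing `z`; the orbit of `x` enters it at some time `m`, so the
window `[m + 1, m + N]` contains at least `N μ(U)` entering times of `x` into `U`. Hence the upper
Banach density of `N(x, U)` is at least `μ(U) > 0`.
-/

open Finset

namespace MeasureTheory.MeasurePreserving

variable {α : Type*} [MeasurableSpace α] {μ : Measure α} {f : α → α}

theorem lintegral_card_filter_iterate_mem (hf : MeasurePreserving f μ μ) {s : Set α}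
    (hs : MeasurableSet s) (I : Finset ℕ) :
    ∫⁻ z, (#{n ∈ I | f^[n] z ∈ s} : ENNReal) ∂μ = #I * μ s := by
  have hmeas (n : ℕ) : MeasurableSet (f^[n] ⁻¹' s) := hs.preimage (hf.iterate n).measurable
  calc ∫⁻ z, (#{n ∈ I | f^[n] z ∈ s} : ENNReal) ∂μ
      = ∫⁻ z, ∑ n ∈ I, (f^[n] ⁻¹' s).indicator 1 z ∂μ := by
        congr 1 with z
        rw [card_filter, Nat.cast_sum]
        exact sum_congr rfl fun n _ => by by_cases h : f^[n] z ∈ s <;> simp [h]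
    _ = ∑ n ∈ I, μ (f^[n] ⁻¹' s) := by
        rw [lintegral_finsetSum _ fun n _ => measurable_one.indicator (hmeas n)]
        exact sum_congr rfl fun n _ => lintegral_indicator_one (hmeas n)
    _ = #I * μ s := by
        simp [(hf.iterate _).measure_preimage hs.nullMeasurableSet]

theorem exists_le_card_filter_iterate_mem [IsProbabilityMeasure μ]
    (hf : MeasurePreserving f μ μ) {s : Set α} (hs : MeasurableSet s) (I : Finset ℕ) :
    ∃ z, #I * μ.real s ≤ #{n ∈ I | f^[n] z ∈ s} := by
  have hint := hf.lintegral_card_filter_iterate_mem hs I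
  obtain ⟨z, hz⟩ := exists_lintegral_le (μ := μ) (by rw [hint]; finiteness)
  rw [hint] at hz
  refine ⟨z, ?_⟩
  simpa [measureReal_def] using ENNReal.toReal_mono (by simp) hz

end MeasureTheory.MeasurePreserving

theorem Dense.exists_iterate_add_mem {X : Type*} [TopologicalSpace X] {f : X → X}
    (hf : Continuous f) {x : X} (hx : Dense (Set.range fun n : ℕ => f^[n] x)) {U : Set X}
    (hU : IsOpen U) (I : Finset ℕ) (z : X) :
    ∃ m, ∀ n ∈ I, f^[n] z ∈ U → f^[m + n] x ∈ U := by
  let W := ⋂ n ∈ {n ∈ I | f^[n] z ∈ U}, f^[n] ⁻¹' U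
  have hW : IsOpen W := isOpen_biInter_finset fun n _ => hU.preimage (hf.iterate n)
  have hzW : z ∈ W := Set.mem_iInter₂.2 fun n hn => (mem_filter.1 hn).2
  obtain ⟨_, ⟨m, rfl⟩, hmW⟩ := hx.exists_mem_open hW ⟨z, hzW⟩
  refine ⟨m, fun n hn hnz => ?_⟩
  rw [add_comm, Function.iterate_add_apply]
  exact Set.mem_iInter₂.1 hmW n (mem_filter.2 ⟨hn, hnz⟩)

theorem div_card_filter_Ico_le_one (F : Set ℕ) (M N : ℕ) :
    (#{k ∈ Ico M (M + N) | k ∈ F} : ℝ) / N ≤ 1 :=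
  div_le_one_of_le₀ (by exact_mod_cast (card_filter_le _ _).trans (by simp)) N.cast_nonneg

theorem le_upperBanachDensity {F : Set ℕ} {c : ℝ}
    (h : ∀ N, ∃ M, N * c ≤ #{k ∈ Ico M (M + N) | k ∈ F}) : c ≤ upperBanachDensity F := by
  have hbdd (N : ℕ) : BddAbove (Set.range fun M : ℕ => (#{k ∈ Ico M (M + N) | k ∈ F} : ℝ) / N) :=
    ⟨1, Set.forall_mem_range.2 fun M => div_card_filter_Ico_le_one F M N⟩
  refine Filter.le_limsup_of_frequently_le (Filter.Eventually.frequently ?_)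
    (Filter.isBoundedUnder_of ⟨1, fun N => ciSup_le fun M => div_card_filter_Ico_le_one F M N⟩)
  filter_upwards [Filter.eventually_gt_atTop 0] with N hN
  obtain ⟨M, hM⟩ := h N
  refine le_trans ?_ (le_ciSup (hbdd N) M)
  rw [le_div_iff₀ (by exact_mod_cast hN), mul_comm]
  exact hM

theorem measureReal_le_upperBanachDensity {X : Type*} [TopologicalSpace X] [MeasurableSpace X]
    [OpensMeasurableSpace X] {μ : Measure X} [IsProbabilityMeasure μ] {f : X → X}
    (hf : MeasurePreserving f μ μ) (hcont : Continuous f) {x : X}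
    (hx : Dense (Set.range fun n : ℕ => f^[n] x)) {U : Set X} (hU : IsOpen U) :
    μ.real U ≤ upperBanachDensity {n | 0 < n ∧ f^[n] x ∈ U} := by
  refine le_upperBanachDensity fun N => ?_
  -- Hits at times `1, …, N` avoid the time `0`, which the entering time set excludes.
  obtain ⟨z, hz⟩ := hf.exists_le_card_filter_iterate_mem hU.measurableSet (Ico 1 (N + 1))
  obtain ⟨m, hm⟩ := hx.exists_iterate_add_mem hcont hU (Ico 1 (N + 1)) z
  refine ⟨m + 1, ?_⟩
  calc (N : ℝ) * μ.real U ≤ #{n ∈ Ico 1 (N + 1) | f^[n] z ∈ U} := by simpa using hz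
    _ ≤ _ := by
      refine Nat.cast_le.2 (card_le_card_of_injOn (m + ·) (fun n hn => ?_)
        (add_right_injective m).injOn)
      obtain ⟨hnI, hnz⟩ := mem_filter.1 hn
      obtain ⟨hn1, hnN⟩ := mem_Ico.1 hnI
      simp only [coe_filter, Set.mem_ofPred_eq]
      exact ⟨mem_Ico.2 ⟨by omega, by omega⟩, by omega, hm n hnI hnz⟩

theorem stmt18_general {X : Type*} [MetricSpace X]
    [MeasurableSpace X] [BorelSpace X] (T : X ≃ₜ X)
    (μ : Measure X) [IsProbabilityMeasure μ]
    (hinv : ∀ s : Set X, MeasurableSet s → μ (⇑T ⁻¹' s) = μ s)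
    (hfull : ∀ U : Set X, IsOpen U → U.Nonempty → 0 < μ U)
    (x : X) (hx : Dense (Set.range fun n : ℕ => (⇑T)^[n] x)) :
    ∀ U : Set X, IsOpen U → U.Nonempty →
      0 < upperBanachDensity {n : ℕ | 0 < n ∧ (⇑T)^[n] x ∈ U} := by
  intro U hU hUne
  have hT : MeasurePreserving T μ μ :=
    ⟨T.continuous.measurable, Measure.ext fun s hs => by
      rw [Measure.map_apply T.continuous.measurable hs, hinv s hs]⟩
  exact (ENNReal.toReal_pos (hfull U hU hUne).ne' (measure_ne_top μ U)).trans_le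
    (measureReal_le_upperBanachDensity hT T.continuous hx hU)

/-- If `(X, T)` is a transitive compact metric dynamical system carrying an
invariant Borel probability measure with full support (an E-system), then every
transitive point `x` is an `F_pubd`-transitive point: for every non-empty open
`U ⊆ X` the entering time set `N(x, U) = {n > 0 : T^[n] x ∈ U}` has positive
upper Banach density. -/
theorem stmt18 {X : Type*} [MetricSpace X] [CompactSpace X]
    [MeasurableSpace X] [BorelSpace X] (T : X ≃ₜ X)
    (htrans : ∀ U V : Set X, IsOpen U → IsOpen V → U.Nonempty → V.Nonempty →
      ∃ n : ℕ, 0 < n ∧ (U ∩ (⇑T)^[n] ⁻¹' V).Nonempty)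
    (μ : Measure X) [IsProbabilityMeasure μ]
    (hinv : ∀ s : Set X, MeasurableSet s → μ (⇑T ⁻¹' s) = μ s)
    (hfull : ∀ U : Set X, IsOpen U → U.Nonempty → 0 < μ U)
    (x : X) (hx : Dense (Set.range fun n : ℕ => (⇑T)^[n] x)) :
    ∀ U : Set X, IsOpen U → U.Nonempty →
      0 < upperBanachDensity {n : ℕ | 0 < n ∧ (⇑T)^[n] x ∈ U} :=
  stmt18_general T μ hinv hfull x hx
end

section
/- If (X,T) is a transitive dynamical system in which the set of minimal points is dense (an M-system), then every transitive point x is an F_{ps}-transitive point: for every non-empty open U ⊆ X, the set N(x,U) = {n ∈ ℕ : T^n(x) ∈ U} is piecewise syndetic. -/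
open Set

/-- Completing `S` by the points far from `S` gives a syndetic set, and by the points near `S`
gives a set that is thick as soon as `S` has `N`-bounded gaps along arbitrarily long blocks. -/
theorem exists_thick_inter_syndetic_of_gaps_le {S : Set ℕ} {N : ℕ}
    (h : ∀ L : ℕ, ∃ k : ℕ, ∀ i ≤ L, ∃ j, k + i ≤ j ∧ j ≤ k + i + N ∧ j ∈ S) :
    ∃ A B : Set ℕ, Thick A ∧ Syndetic B ∧ S = A ∩ B := by
  let C : Set ℕ := {m | ∀ j, j ≤ m → m ≤ j + N → j ∉ S}
  refine ⟨S ∪ Cᶜ, S ∪ C, fun L => ?_, ⟨N, fun i => ?_⟩, ?_⟩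
  · obtain ⟨k, hk⟩ := h L
    refine ⟨k + N, fun i hi => ?_⟩
    obtain ⟨j, hkj, hjk, hjS⟩ := hk i hi
    exact or_iff_not_imp_left.2 fun _ hC => hC j (by omega) (by omega) hjS
  · by_cases hS : ∃ j, i ≤ j ∧ j ≤ i + N ∧ j ∈ S
    · obtain ⟨j, hij, hji, hjS⟩ := hS
      exact ⟨j, hij, hji, Or.inl hjS⟩
    · push Not at hS
      exact ⟨i + N, by omega, le_rfl, Or.inr fun j hj hj' => hS j (by omega) (by omega)⟩
  · ext n
    simp only [mem_inter_iff, mem_union, mem_compl_iff]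
    tauto

theorem exists_pos_iterate_mem_of_dense_orbit {X : Type*} [TopologicalSpace X] {f : X → X}
    (hf : Continuous f) (hsurj : Function.Surjective f) {x : X}
    (hx : Dense (range fun n : ℕ => f^[n] x)) {V : Set X} (hV : IsOpen V) (hVne : V.Nonempty) :
    ∃ k, 0 < k ∧ f^[k] x ∈ V := by
  obtain ⟨_, ⟨n, rfl⟩, hn⟩ := hx.exists_mem_open (hV.preimage hf) (hVne.preimage hsurj)
  exact ⟨n + 1, n.succ_pos, by rwa [Function.iterate_succ_apply']⟩

section MinimalPoint

variable {X : Type*} [TopologicalSpace X] [CompactSpace X] {f : X → X} {z : X}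

theorem exists_orbit_closure_subset_returns_within
    (hz : ∀ y ∈ closure (range fun n : ℕ => f^[n] z),
      closure (range fun n : ℕ => f^[n] z) ⊆ closure (range fun n : ℕ => f^[n] y))
    (hf : Continuous f) {U : Set X} (hU : IsOpen U) (hzU : z ∈ U) :
    ∃ N, closure (range fun n : ℕ => f^[n] z) ⊆ {y | ∃ n ≤ N, f^[n] y ∈ U} := by
  have hcover : closure (range fun n : ℕ => f^[n] z) ⊆ ⋃ n : ℕ, f^[n] ⁻¹' U := fun y hy => by
    have hzy := hz y hy (subset_closure ⟨0, rfl⟩)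
    obtain ⟨_, hU', n, rfl⟩ := mem_closure_iff.1 hzy U hU hzU
    exact mem_iUnion.2 ⟨n, hU'⟩
  obtain ⟨t, ht⟩ := isClosed_closure.isCompact.elim_finite_subcover _
    (fun n => hU.preimage (hf.iterate n)) hcover
  obtain ⟨N, htN⟩ := t.exists_nat_subset_range
  refine ⟨N, fun y hy => ?_⟩
  obtain ⟨n, hnt, hn⟩ := mem_iUnion₂.1 (ht hy)
  exact ⟨n, (Finset.mem_range.1 (htN hnt)).le, hn⟩

theorem exists_nhds_returns_with_bounded_gaps
    (hz : ∀ y ∈ closure (range fun n : ℕ => f^[n] z),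
      closure (range fun n : ℕ => f^[n] z) ⊆ closure (range fun n : ℕ => f^[n] y))
    (hf : Continuous f) {U : Set X} (hU : IsOpen U) (hzU : z ∈ U) :
    ∃ N, ∀ L, ∃ V, IsOpen V ∧ z ∈ V ∧ ∀ y ∈ V, ∀ i ≤ L, ∃ n ≤ N, f^[n + i] y ∈ U := by
  obtain ⟨N, hN⟩ := exists_orbit_closure_subset_returns_within hz hf hU hzU
  have hW : IsOpen {y | ∃ n ≤ N, f^[n] y ∈ U} := by
    have hW_eq : {y | ∃ n ≤ N, f^[n] y ∈ U} = ⋃ n ∈ Iic N, f^[n] ⁻¹' U := by ext; simp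
    exact hW_eq ▸ isOpen_biUnion fun n _ => hU.preimage (hf.iterate n)
  refine ⟨N, fun L => ⟨⋂ i ∈ Iic L, f^[i] ⁻¹' {y | ∃ n ≤ N, f^[n] y ∈ U}, ?_, ?_, ?_⟩⟩
  · exact (finite_Iic L).isOpen_biInter fun i _ => hW.preimage (hf.iterate i)
  · exact mem_iInter₂.2 fun i _ => hN (subset_closure ⟨i, rfl⟩)
  · intro y hy i hi
    obtain ⟨n, hn, hnU⟩ := mem_iInter₂.1 hy i hi
    exact ⟨n, hn, by rwa [Function.iterate_add_apply]⟩

end MinimalPoint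

theorem stmt19_general {X : Type*} [MetricSpace X] [CompactSpace X] (T : X ≃ₜ X)
    (hmin : Dense {z : X |
      ∀ y ∈ closure (Set.range fun n : ℕ => (⇑T)^[n] z),
        closure (Set.range fun n : ℕ => (⇑T)^[n] z) ⊆
          closure (Set.range fun n : ℕ => (⇑T)^[n] y)})
    (x : X) (hx : Dense (Set.range fun n : ℕ => (⇑T)^[n] x)) :
    ∀ U : Set X, IsOpen U → U.Nonempty →
      ∃ A B : Set ℕ, Thick A ∧ Syndetic B ∧
        {n : ℕ | 0 < n ∧ (⇑T)^[n] x ∈ U} = A ∩ B := by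
  intro U hU hUne
  obtain ⟨z, hz, hzU⟩ := hmin.exists_mem_open hU hUne
  obtain ⟨N, hN⟩ := exists_nhds_returns_with_bounded_gaps hz T.continuous hU hzU
  refine exists_thick_inter_syndetic_of_gaps_le (N := N) fun L => ?_
  obtain ⟨V, hV, hzV, hVU⟩ := hN L
  obtain ⟨k, hk, hkV⟩ :=
    exists_pos_iterate_mem_of_dense_orbit T.continuous T.surjective hx hV ⟨z, hzV⟩
  refine ⟨k, fun i hi => ?_⟩
  obtain ⟨n, hn, hnU⟩ := hVU _ hkV i hi
  refine ⟨n + i + k, by omega, by omega, by omega, ?_⟩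
  rwa [Function.iterate_add_apply]

/-- If `(X, T)` is a transitive compact metric dynamical system in which the
set of minimal points is dense (an M-system), then every transitive point `x`
is an `F_ps`-transitive point: for every non-empty open `U ⊆ X` the entering
time set `N(x, U) = {n > 0 : T^[n] x ∈ U}` is piecewise syndetic, i.e. the
intersection of a thick set and a syndetic set. -/
theorem stmt19 {X : Type*} [MetricSpace X] [CompactSpace X] (T : X ≃ₜ X)
    (htrans : ∀ U V : Set X, IsOpen U → IsOpen V → U.Nonempty → V.Nonempty →
      ∃ n : ℕ, 0 < n ∧ (U ∩ (⇑T)^[n] ⁻¹' V).Nonempty)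
    (hmin : Dense {z : X |
      ∀ y ∈ closure (Set.range fun n : ℕ => (⇑T)^[n] z),
        closure (Set.range fun n : ℕ => (⇑T)^[n] z) ⊆
          closure (Set.range fun n : ℕ => (⇑T)^[n] y)})
    (x : X) (hx : Dense (Set.range fun n : ℕ => (⇑T)^[n] x)) :
    ∀ U : Set X, IsOpen U → U.Nonempty →
      ∃ A B : Set ℕ, Thick A ∧ Syndetic B ∧
        {n : ℕ | 0 < n ∧ (⇑T)^[n] x ∈ U} = A ∩ B :=
  stmt19_general T hmin x hx
end
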